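/- For all natural numbers n, m and every natural number j ≥ 1, the identity ∑_{k=0}^{m} C(m,k) · C(k+j−1, n) = (1/n!) · (d^n/dx^n)[(x+1)^{j−1} (x+2)^{m}]|_{x=0} holds, where the right-hand side is the n-th iterated derivative at 0 of the real function x ↦ (x+1)^{j−1}(x+2)^m. (Writing ℓ = −j, this is the formula ζ_{ℓ+n+1≤0}(n|m;ℓ) of Theorem 3.1, computing h^n(O_{P^{n|m}}(ℓ)) for negative twist ℓ.) -/

import Mathlib

/-! Writing `x + 2 = (x + 1) + 1` and expanding binomially turns the function into
`∑ₖ C(m,k) (x + 1)^(k + j - 1)`, and the `n`-th Taylor coefficient at `0` of `(x + 1)^p` is `C(p,n)`. -/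

open Finset

theorem iteratedDeriv_add_const_pow {𝕜 : Type*} [NontriviallyNormedField 𝕜] (a x : 𝕜) (p n : ℕ) :
    iteratedDeriv n (fun y : 𝕜 => (y + a) ^ p) x = p.descFactorial n * (x + a) ^ (p - n) := by
  rw [iteratedDeriv_comp_add_const n (· ^ p) a]
  exact iteratedDeriv_pow p n

theorem iteratedDeriv_add_one_pow_zero {𝕜 : Type*} [NontriviallyNormedField 𝕜] (p n : ℕ) :
    iteratedDeriv n (fun y : 𝕜 => (y + 1) ^ p) 0 = n.factorial * p.choose n := by
  rw [iteratedDeriv_add_const_pow, Nat.descFactorial_eq_factorial_mul_choose]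
  simp

theorem add_one_pow_mul_add_two_pow {R : Type*} [CommSemiring R] (x : R) (q m : ℕ) :
    (x + 1) ^ q * (x + 2) ^ m = ∑ k ∈ range (m + 1), m.choose k * (x + 1) ^ (k + q) := by
  rw [show x + 2 = (x + 1) + 1 by ring, add_pow (x + 1) 1 m, mul_sum]
  refine sum_congr rfl fun k _ => ?_
  ring

theorem stmt_2 (n m j : ℕ) (hj : 1 ≤ j) :
    ((∑ k ∈ Finset.range (m + 1), m.choose k * (k + j - 1).choose n : ℕ) : ℝ) =
      (1 / (n.factorial : ℝ)) *
        iteratedDeriv n (fun x : ℝ => (x + 1) ^ (j - 1) * (x + 2) ^ m) 0 := by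
  simp_rw [add_one_pow_mul_add_two_pow]
  rw [iteratedDeriv_fun_sum fun k _ => by fun_prop]
  simp only [iteratedDeriv_const_mul_field, iteratedDeriv_add_one_pow_zero]
  push_cast
  rw [mul_sum]
  refine sum_congr rfl fun k _ => ?_
  rw [show k + j - 1 = k + (j - 1) by omega]
  field_simp
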